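/- arXiv:2309.00159 — 14 statements merged into one kernel-verified Lean document; each statement's English description precedes it below -/
import Mathlib

section
/- Let B be a ternary relation on a set U satisfying (BT2): B(a,b,c) → B(a,a,b). Then B satisfies (BT3): B(a,b,c) ∧ B(a,c,b) → b = c, if and only if B satisfies both (BTW): B(a,b,a) → a = b, and (C): if a, b, c are pairwise distinct then ¬B(a,b,c) ∨ ¬B(a,c,b). -/
theorem stmt_0 {U : Type*} (B : U → U → U → Prop)
    (hBT2 : ∀ a b c, B a b c → B a a b) :
    (∀ a b c, B a b c → B a c b → b = c) ↔
      ((∀ a b, B a b a → a = b) ∧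
       (∀ a b c, a ≠ b → b ≠ c → a ≠ c → (¬ B a b c ∨ ¬ B a c b))) := by
  constructor
  · intro h
    refine ⟨fun a b hb => (h a b a hb (hBT2 a b a hb)).symm, fun a b c hab hbc hac => ?_⟩
    by_contra hcon
    push_neg at hcon
    exact hbc (h a b c hcon.1 hcon.2)
  · rintro ⟨hW, hC⟩ a b c h1 h2
    by_cases hbc : b = c
    · exact hbc
    by_cases hab : a = b
    · subst hab; exact hW a c h2
    by_cases hac : a = c
    · subst hac; exact (hW a b h1).symm
    rcases hC a b c hab hbc hac with h | h
    · exact absurd h1 h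
    · exact absurd h2 h
end

section
/- Let R be a reflexive binary relation on a set U, and define the ternary relation B_R by B_R(x,y,z) iff (R x y ∧ R y z) ∨ (R z y ∧ R y x). Then R is strongly antisymmetric (i.e., R x y ∧ R y z ∧ R z x → y = z) if and only if B_R satisfies the betweenness axioms (BT0) B(a,a,a), (BT1) B(a,b,c) → B(c,b,a), (BT2) B(a,b,c) → B(a,a,b), and (BT3) B(a,b,c) ∧ B(a,c,b) → b = c. -/
theorem stmt_1 {U : Type*} (R : U → U → Prop) (hrefl : ∀ x, R x x)
    (B : U → U → U → Prop)
    (hB : ∀ x y z, B x y z ↔ (R x y ∧ R y z) ∨ (R z y ∧ R y x)) :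
    (∀ x y z, R x y → R y z → R z x → y = z) ↔
      ((∀ a, B a a a) ∧
       (∀ a b c, B a b c → B c b a) ∧
       (∀ a b c, B a b c → B a a b) ∧
       (∀ a b c, B a b c → B a c b → b = c)) := by
  constructor
  · intro h
    refine ⟨fun a => (hB a a a).2 (Or.inl ⟨hrefl a, hrefl a⟩), ?_, ?_, ?_⟩
    · intro a b c hab
      rw [hB] at hab ⊢; tauto
    · intro a b c habc
      rw [hB] at habc ⊢
      rcases habc with ⟨h1, _⟩ | ⟨_, h2⟩
      · exact Or.inl ⟨hrefl a, h1⟩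
      · exact Or.inr ⟨h2, hrefl a⟩
    · intro a b c h1 h2
      rw [hB] at h1 h2
      rcases h1 with ⟨hab, hbc⟩ | ⟨hcb, hba⟩ <;> rcases h2 with ⟨hac, hcb'⟩ | ⟨hbc', hca⟩
      · exact h b b c (hrefl b) hbc hcb'
      · exact h a b c hab hbc hca
      · exact (h a c b hac hcb hba).symm
      · exact h c b c hcb hbc' (hrefl c)
  · rintro ⟨-, -, -, h3⟩ x y z hxy hyz hzx
    exact h3 x y z ((hB x y z).2 (Or.inl ⟨hxy, hyz⟩)) ((hB x z y).2 (Or.inr ⟨hyz, hzx⟩))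
end

section
/- Let B be a ternary relation on U with f_B(X,Y) = {u | ∃ x ∈ X, ∃ y ∈ Y, B(x,u,y)}. Then B satisfies (BT2) (∀a b c, B(a,b,c) → B(a,a,b)) if and only if for all X, Y, Z ⊆ U, Y ∩ f_B(X,Z) ⊆ f_B(X ∩ f_B(X,Y), Z). -/
def possOp {U : Type*} (B : U → U → U → Prop) (X Y : Set U) : Set U :=
  {u | ∃ x ∈ X, ∃ y ∈ Y, B x u y}

theorem stmt_4 {U : Type*} (B : U → U → U → Prop) :
    (∀ a b c, B a b c → B a a b) ↔
      (∀ X Y Z : Set U,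
        Y ∩ possOp B X Z ⊆ possOp B (X ∩ possOp B X Y) Z) := by
  constructor
  · intro h X Y Z u ⟨hu, x, hx, z, hz, hB⟩
    exact ⟨x, ⟨hx, x, hx, u, hu, h x u z hB⟩, z, hz, hB⟩
  · intro h a b c hB
    obtain ⟨x, ⟨hx, x', hx', y, hy, hB'⟩, z, hz, _⟩ :=
      h {a} {b} {c} (Set.mem_inter rfl ⟨a, rfl, c, rfl, hB⟩)
    rw [Set.mem_singleton_iff] at hx hx' hy
    subst hx; subst hx'; subst hy
    exact hB'
end

section
/- Let B be a ternary relation on U with f_B(X,Y) = {u | ∃ x ∈ X, ∃ y ∈ Y, B(x,u,y)} and g_B(X,Y) = {u | ∀ x ∈ X, ∀ y ∈ Y, B(x,u,y)}. Then B satisfies (BT3) (∀a b c, B(a,b,c) ∧ B(a,c,b) → b = c) if and only if for all X, Y ⊆ U, f_B(X, g_B(X, Yᶜ) ∩ Y) ⊆ Y. -/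
def suffOp {U : Type*} (B : U → U → U → Prop) (X Y : Set U) : Set U :=
  {u | ∀ x ∈ X, ∀ y ∈ Y, B x u y}

theorem stmt_5 {U : Type*} (B : U → U → U → Prop) :
    (∀ a b c, B a b c → B a c b → b = c) ↔
      (∀ X Y : Set U, possOp B X (suffOp B X Yᶜ ∩ Y) ⊆ Y) := by
  constructor
  · rintro h X Y u ⟨x, hx, y, ⟨hy1, hy2⟩, hB⟩
    by_contra hu
    have hByu : B x y u := hy1 x hx u hu
    exact hu ((h x u y hB hByu) ▸ hy2)
  · intro h a b c hbc hcb
    by_contra hne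
    have : b ∈ possOp B {a} (suffOp B {a} ({b}ᶜ)ᶜ ∩ {b}ᶜ) := by
      refine ⟨a, rfl, c, ⟨?_, ?_⟩, hbc⟩
      · intro x hx z hz
        simp only [Set.mem_singleton_iff] at hx
        rw [compl_compl] at hz
        simp only [Set.mem_singleton_iff] at hz
        subst hx hz; exact hcb
      · simp only [Set.mem_compl_iff, Set.mem_singleton_iff]
        exact fun hcb' => hne hcb'.symm
    exact h {a} ({b}ᶜ) this rfl
end

section
/- Let B be a ternary relation on U with g_B(X,Y) = {u | ∀ x ∈ X, ∀ y ∈ Y, B(x,u,y)}. Then B satisfies (BTW) (∀a b, B(a,b,a) → a = b) if and only if for every nonempty X ⊆ U, g_B(X,X) ⊆ X. -/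
theorem stmt_6 {U : Type*} (B : U → U → U → Prop) :
    (∀ a b, B a b a → a = b) ↔
      (∀ X : Set U, X.Nonempty → suffOp B X X ⊆ X) := by
  constructor
  · rintro h X ⟨x, hx⟩ u hu
    have := h x u (hu x hx x hx)
    rwa [← this]
  · intro h a b hab
    have := h {a} ⟨a, rfl⟩ (by
      intro x hx y hy
      simp only [Set.mem_singleton_iff] at hx hy
      subst hx; subst hy; exact hab : b ∈ suffOp B {a} {a})
    exact this.symm
end

section
/- Let B be a ternary relation on U with f_B(X,Y) = {u | ∃ x ∈ X, ∃ y ∈ Y, B(x,u,y)}. Then B satisfies (BT2s) (∀a b, B(a,a,b)) if and only if for all X ⊆ U and every nonempty Y ⊆ U, X ⊆ f_B(X,Y). -/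
theorem stmt_7 {U : Type*} (B : U → U → U → Prop) :
    (∀ a b, B a a b) ↔
      (∀ X Y : Set U, Y.Nonempty → X ⊆ possOp B X Y) := by
  constructor
  · intro h X Y ⟨y, hy⟩ x hx
    exact ⟨x, hx, y, hy, h x y⟩
  · intro h a b
    obtain ⟨x, hx, y, hy, hB⟩ := h {a} {b} ⟨b, rfl⟩ rfl
    rw [Set.mem_singleton_iff] at hx hy
    subst hx hy; exact hB
end

section
/- Every betweenness algebra is a weak betweenness algebra: if ⟨A,f,g⟩ satisfies (ABT0) x ≤ f(x,x), (ABT2) y·f(x,z) ≤ f(x·f(x,y), z), (ABT3) f(x, g(x,-y)·y) ≤ y, and (wMIA) x ≠ 0 ∧ y ≠ 0 → g(x,y) ≤ f(x,y), then for all a ≠ 0, g(a,a) ≤ a. -/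
theorem stmt_11 {A : Type*} [BooleanAlgebra A] (f g : A → A → A)
    (hfN1 : ∀ y, f ⊥ y = ⊥) (hfN2 : ∀ x, f x ⊥ = ⊥)
    (hfA1 : ∀ x y z, f (x ⊔ y) z = f x z ⊔ f y z)
    (hfA2 : ∀ x y z, f z (x ⊔ y) = f z x ⊔ f z y)
    (hgN1 : ∀ y, g ⊥ y = ⊤) (hgN2 : ∀ x, g x ⊥ = ⊤)
    (hgA1 : ∀ x y z, g (x ⊔ y) z = g x z ⊓ g y z)
    (hgA2 : ∀ x y z, g z (x ⊔ y) = g z x ⊓ g z y)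
    (hABT0 : ∀ x, x ≤ f x x)
    (hABT2 : ∀ x y z, y ⊓ f x z ≤ f (x ⊓ f x y) z)
    (hABT3 : ∀ x y, f x (g x yᶜ ⊓ y) ≤ y)
    (hwMIA : ∀ x y, x ≠ ⊥ → y ≠ ⊥ → g x y ≤ f x y) :
    ∀ a, a ≠ ⊥ → g a a ≤ a := by
  intro a ha
  set b := g a a ⊓ aᶜ with hb
  have h1 : f a b ≤ aᶜ := by
    have := hABT3 a aᶜ
    rwa [compl_compl] at this
  have h2 : a ⊓ f a b = ⊥ := by
    refine le_antisymm (le_trans (inf_le_inf_left a h1) ?_) bot_le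
    simp
  have h3 : b ≤ f a a := le_trans inf_le_left (hwMIA a a ha ha)
  have h4 : b ≤ f (a ⊓ f a b) a := by
    calc b = b ⊓ f a a := (inf_eq_left.mpr h3).symm
    _ ≤ _ := hABT2 a b a
  rw [h2, hfN1] at h4
  have hb0 : g a a ⊓ aᶜ = ⊥ := le_bot_iff.mp h4
  exact sdiff_eq_bot_iff.mp (by rwa [sdiff_eq])
end

section
/- In a Boolean algebra with a binary possibility operator f, the strong axiom (ABT2s): b ≠ 0 → a ≤ f(a,b), implies both (ABT0): x ≤ f(x,x), and (ABT2): y·f(x,z) ≤ f(x·f(x,y), z). -/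
theorem stmt_12 {A : Type*} [BooleanAlgebra A] (f : A → A → A)
    (hfN1 : ∀ y, f ⊥ y = ⊥) (hfN2 : ∀ x, f x ⊥ = ⊥)
    (hfA1 : ∀ x y z, f (x ⊔ y) z = f x z ⊔ f y z)
    (hfA2 : ∀ x y z, f z (x ⊔ y) = f z x ⊔ f z y)
    (hABT2s : ∀ a b, b ≠ ⊥ → a ≤ f a b) :
    (∀ x, x ≤ f x x) ∧ (∀ x y z, y ⊓ f x z ≤ f (x ⊓ f x y) z) := by
  refine ⟨fun x => ?_, fun x y z => ?_⟩
  · by_cases h : x = ⊥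
    · simp [h, hfN1]
    · exact hABT2s x x h
  · by_cases h : y = ⊥
    · simp [h]
    · rw [inf_eq_left.mpr (hABT2s x y h)]
      exact inf_le_right
end

section
/- Let ⟨A,f,g⟩ be a betweenness algebra and suppose a, b ∈ A are nonzero with g(a,b) = 1. Then: (1) |A| = 2 or a·b = 0; (2) both a and b are atoms of A; (3) if c ≠ 0 and g(a,c) = 1, then b = c. -/
theorem stmt_13 {A : Type*} [BooleanAlgebra A] [Nontrivial A] (f g : A → A → A)
    (hfN1 : ∀ y, f ⊥ y = ⊥) (hfN2 : ∀ x, f x ⊥ = ⊥)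
    (hfA1 : ∀ x y z, f (x ⊔ y) z = f x z ⊔ f y z)
    (hfA2 : ∀ x y z, f z (x ⊔ y) = f z x ⊔ f z y)
    (hgN1 : ∀ y, g ⊥ y = ⊤) (hgN2 : ∀ x, g x ⊥ = ⊤)
    (hgA1 : ∀ x y z, g (x ⊔ y) z = g x z ⊓ g y z)
    (hgA2 : ∀ x y z, g z (x ⊔ y) = g z x ⊓ g z y)
    (hABT0 : ∀ x, x ≤ f x x)
    (hABT1f : ∀ x y, f x y ≤ f y x)
    (hABT1g : ∀ x y, g x y ≤ g y x)
    (hABT2 : ∀ x y z, y ⊓ f x z ≤ f (x ⊓ f x y) z)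
    (hABT3 : ∀ x y, f x (g x yᶜ ⊓ y) ≤ y)
    (hwMIA : ∀ x y, x ≠ ⊥ → y ≠ ⊥ → g x y ≤ f x y)
    (a b : A) (ha : a ≠ ⊥) (hb : b ≠ ⊥) (hgab : g a b = ⊤) :
    ((∀ x : A, x = ⊥ ∨ x = ⊤) ∨ a ⊓ b = ⊥) ∧
    (IsAtom a ∧ IsAtom b) ∧
    (∀ c, c ≠ ⊥ → g a c = ⊤ → b = c) := by
  -- g is antitone in the second argument
  have gmono2 : ∀ z x y : A, x ≤ y → g z y ≤ g z x := by
    intro z x y h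
    have hxy : x ⊔ y = y := sup_eq_right.mpr h
    have : g z y = g z x ⊓ g z y := by rw [← hgA2, hxy]
    rw [this]; exact inf_le_left
  -- f is monotone in the second argument
  have fmono2 : ∀ z x y : A, x ≤ y → f z x ≤ f z y := by
    intro z x y h
    have hxy : x ⊔ y = y := sup_eq_right.mpr h
    have : f z y = f z x ⊔ f z y := by rw [← hfA2, hxy]
    rw [this]; exact le_sup_left
  -- key lemma: if g p q = ⊤ with p, q ≠ ⊥ then q is an atom
  have atomOf : ∀ p q : A, p ≠ ⊥ → q ≠ ⊥ → g p q = ⊤ → IsAtom q := by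
    intro p q hp hq hg
    refine ⟨hq, ?_⟩
    intro s hs
    by_contra hsne
    have hsq : s ≤ q := le_of_lt hs
    -- q ⊓ sᶜ ≠ ⊥
    have hyc : q ⊓ sᶜ ≠ ⊥ := by
      intro h
      have h1 : q \ s = ⊥ := by rw [sdiff_eq]; exact h
      have h2 : q ≤ s := sdiff_eq_bot_iff.mp h1
      exact (lt_irrefl q (lt_of_le_of_lt h2 hs)).elim
    -- g p s = ⊤ and hence f p s = ⊤
    have hgps : g p s = ⊤ := top_le_iff.mp (hg ▸ gmono2 p s q hsq)
    have hfps : f p s = ⊤ := by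
      have := hwMIA p s hp hsne
      rw [hgps] at this
      exact top_le_iff.mp this
    -- apply ABT3 with y = qᶜ ⊔ s
    set y : A := qᶜ ⊔ s with hy
    have hycompl : yᶜ = q ⊓ sᶜ := by rw [hy, compl_sup, compl_compl]
    have hgyc : g p yᶜ = ⊤ := by
      have hle : yᶜ ≤ q := by rw [hycompl]; exact inf_le_left
      exact top_le_iff.mp (hg ▸ gmono2 p yᶜ q hle)
    have h3 := hABT3 p y
    rw [hgyc, top_inf_eq] at h3
    have h4 : (⊤ : A) ≤ y := by
      calc (⊤ : A) = f p s := hfps.symm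
        _ ≤ f p y := fmono2 p s y (le_sup_right)
        _ ≤ y := h3
    have h5 : y = ⊤ := top_le_iff.mp h4
    have : yᶜ = ⊥ := by rw [h5, compl_top]
    rw [hycompl] at this
    exact hyc this
  have hgba : g b a = ⊤ := top_le_iff.mp (hgab ▸ hABT1g a b)
  have hAtomB : IsAtom b := atomOf a b ha hb hgab
  have hAtomA : IsAtom a := atomOf b a hb ha hgba
  have hfab : f a b = ⊤ := by
    have := hwMIA a b ha hb
    rw [hgab] at this
    exact top_le_iff.mp this
  refine ⟨?_, ⟨hAtomA, hAtomB⟩, ?_⟩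
  · -- part (1)
    by_cases hab : a ⊓ b = ⊥
    · exact Or.inr hab
    · left
      -- a = b since both atoms and a ⊓ b ≠ ⊥
      have hab_a : a ⊓ b = a := by
        rcases lt_or_eq_of_le (inf_le_left : a ⊓ b ≤ a) with h | h
        · exact absurd (hAtomA.2 _ h) hab
        · exact h
      have hab_b : a ⊓ b = b := by
        rcases lt_or_eq_of_le (inf_le_right : a ⊓ b ≤ b) with h | h
        · exact absurd (hAtomB.2 _ h) hab
        · exact h
      have haeqb : a = b := by rw [← hab_a, hab_b]
      have hgaa : g a a = ⊤ := by rw [haeqb] at hgab ⊢; exact hgab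
      have hfaa : f a a = ⊤ := by
        have := hwMIA a a ha ha
        rw [hgaa] at this
        exact top_le_iff.mp this
      -- show aᶜ = ⊥, i.e. a = ⊤
      have hac : aᶜ = ⊥ := by
        by_contra hacne
        have h1 : f a aᶜ ≤ aᶜ := by
          have := hABT3 a aᶜ
          rwa [compl_compl, hgaa, top_inf_eq] at this
        have h2 := hABT2 a aᶜ a
        rw [hfaa, inf_top_eq] at h2
        have h3 : a ⊓ f a aᶜ = ⊥ := by
          have : a ⊓ f a aᶜ ≤ a ⊓ aᶜ := inf_le_inf_left a h1
          rw [inf_compl_eq_bot] at this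
          exact le_bot_iff.mp this
        rw [h3, hfN1] at h2
        exact hacne (le_bot_iff.mp h2)
      have hatop : a = ⊤ := by
        have := congrArg compl hac
        rwa [compl_compl, compl_bot] at this
      intro x
      by_cases hx : x = ⊤
      · exact Or.inr hx
      · left
        have : x < a := by rw [hatop]; exact lt_top_iff_ne_top.mpr hx
        exact hAtomA.2 x this
  · -- part (3): uniqueness
    intro c hc hgac
    have hAtomC : IsAtom c := atomOf a c ha hc hgac
    by_contra hne
    have hdisj : Disjoint b c := hAtomB.disjoint_of_ne hAtomC hne
    have hbc : b ≤ cᶜ := hdisj.le_compl_right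
    have h1 : f a cᶜ ≤ cᶜ := by
      have := hABT3 a cᶜ
      rwa [compl_compl, hgac, top_inf_eq] at this
    have h2 : (⊤ : A) ≤ cᶜ := by
      calc (⊤ : A) = f a b := hfab.symm
        _ ≤ f a cᶜ := fmono2 a b cᶜ hbc
        _ ≤ cᶜ := h1
    have : cᶜ = ⊤ := top_le_iff.mp h2
    rw [compl_eq_top] at this
    exact hc this
end

section
/- Let ⟨A,g⟩ be a Boolean algebra with a binary sufficiency operator g satisfying (ABTW): a ≠ 0 → g(a,a) ≤ a. If g(a,b) ≠ 0, then a·b ≤ g(a,b); if moreover a·b ≠ 0, then g(a,b) = a·b and a·b is an atom of A. -/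
theorem stmt_14 {A : Type*} [BooleanAlgebra A] (g : A → A → A)
    (hgN1 : ∀ y, g ⊥ y = ⊤) (hgN2 : ∀ x, g x ⊥ = ⊤)
    (hgA1 : ∀ x y z, g (x ⊔ y) z = g x z ⊓ g y z)
    (hgA2 : ∀ x y z, g z (x ⊔ y) = g z x ⊓ g z y)
    (hABTW : ∀ a, a ≠ ⊥ → g a a ≤ a)
    (a b : A) (h : g a b ≠ ⊥) :
    a ⊓ b ≤ g a b ∧ (a ⊓ b ≠ ⊥ → g a b = a ⊓ b ∧ IsAtom (a ⊓ b)) := by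
  have anti1 : ∀ x x' z : A, x ≤ x' → g x' z ≤ g x z := by
    intro x x' z hx
    have h1 := hgA1 x x' z
    rw [sup_eq_right.mpr hx] at h1
    rw [h1]; exact inf_le_left
  have anti2 : ∀ x x' z : A, x ≤ x' → g z x' ≤ g z x := by
    intro x x' z hx
    have h1 := hgA2 x x' z
    rw [sup_eq_right.mpr hx] at h1
    rw [h1]; exact inf_le_left
  have key : ∀ x : A, x ≠ ⊥ → x ≤ a ⊓ b → g a b ≤ x := by
    intro x hx hxc
    have h1 : g a b ≤ g x b := anti1 x a b (hxc.trans inf_le_left)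
    have h2 : g x b ≤ g x x := anti2 x b x (hxc.trans inf_le_right)
    exact (h1.trans h2).trans (hABTW x hx)
  have h1 : a ⊓ b ≤ g a b := by
    rw [← sdiff_eq_bot_iff]
    by_contra he
    have hle : g a b ≤ (a ⊓ b) \ g a b := key _ he sdiff_le
    have : g a b ≤ g a b ⊓ (g a b)ᶜ :=
      le_inf le_rfl (hle.trans (by rw [sdiff_eq]; exact inf_le_right))
    rw [inf_compl_eq_bot] at this
    exact h (le_bot_iff.mp this)
  refine ⟨h1, fun hc => ?_⟩
  have heq : g a b = a ⊓ b := le_antisymm (key _ hc le_rfl) h1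
  refine ⟨heq, hc, fun x hx => ?_⟩
  by_contra hxne
  have hd1 : g a b ≤ x := key x hxne hx.le
  have hy : (a ⊓ b) \ x ≠ ⊥ := by
    intro h0
    exact hx.ne (le_antisymm hx.le (sdiff_eq_bot_iff.mp h0))
  have hd2 : g a b ≤ (a ⊓ b) \ x := key _ hy sdiff_le
  have : g a b ≤ x ⊓ ((a ⊓ b) \ x) := le_inf hd1 hd2
  rw [inf_sdiff_self_right] at this
  exact h (le_bot_iff.mp this)
end

section
/- Let ⟨A,f,g⟩ be a PS-algebra satisfying (ABT0) x ≤ f(x,x), (ABT2) y·f(x,z) ≤ f(x·f(x,y),z), and (ABT3) f(x, g(x,-y)·y) ≤ y. Then (ABTW): a ≠ 0 → g(a,a) ≤ a, holds if and only if for all a, b with a·b ≠ 0 we have g(a,b) ≤ f(a,b). -/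
theorem stmt_15 {A : Type*} [BooleanAlgebra A] (f g : A → A → A)
    (hfN1 : ∀ y, f ⊥ y = ⊥) (hfN2 : ∀ x, f x ⊥ = ⊥)
    (hfA1 : ∀ x y z, f (x ⊔ y) z = f x z ⊔ f y z)
    (hfA2 : ∀ x y z, f z (x ⊔ y) = f z x ⊔ f z y)
    (hgN1 : ∀ y, g ⊥ y = ⊤) (hgN2 : ∀ x, g x ⊥ = ⊤)
    (hgA1 : ∀ x y z, g (x ⊔ y) z = g x z ⊓ g y z)
    (hgA2 : ∀ x y z, g z (x ⊔ y) = g z x ⊓ g z y)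
    (hABT0 : ∀ x, x ≤ f x x)
    (hABT2 : ∀ x y z, y ⊓ f x z ≤ f (x ⊓ f x y) z)
    (hABT3 : ∀ x y, f x (g x yᶜ ⊓ y) ≤ y) :
    (∀ a, a ≠ ⊥ → g a a ≤ a) ↔ (∀ a b, a ⊓ b ≠ ⊥ → g a b ≤ f a b) := by
  have fmono1 : ∀ x y z, x ≤ y → f x z ≤ f y z := by
    intro x y z h
    have : f y z = f x z ⊔ f y z := by rw [← hfA1, sup_eq_right.2 h]
    rw [this]; exact le_sup_left
  have fmono2 : ∀ x y z, x ≤ y → f z x ≤ f z y := by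
    intro x y z h
    have : f z y = f z x ⊔ f z y := by rw [← hfA2, sup_eq_right.2 h]
    rw [this]; exact le_sup_left
  have ganti1 : ∀ x y z, x ≤ y → g y z ≤ g x z := by
    intro x y z h
    have : g y z = g x z ⊓ g y z := by rw [← hgA1, sup_eq_right.2 h]
    rw [this]; exact inf_le_left
  have ganti2 : ∀ x y z, x ≤ y → g z y ≤ g z x := by
    intro x y z h
    have : g z y = g z x ⊓ g z y := by rw [← hgA2, sup_eq_right.2 h]
    rw [this]; exact inf_le_left
  constructor
  · intro H a b hab
    calc g a b ≤ g (a ⊓ b) (a ⊓ b) :=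
          le_trans (ganti1 (a ⊓ b) a b inf_le_left) (ganti2 (a ⊓ b) b (a ⊓ b) inf_le_right)
      _ ≤ a ⊓ b := H _ hab
      _ ≤ f (a ⊓ b) (a ⊓ b) := hABT0 _
      _ ≤ f a b := le_trans (fmono1 _ _ _ inf_le_left) (fmono2 _ _ _ inf_le_right)
  · intro H a ha
    have h1 : g a a ≤ f a a := H a a (by simpa using ha)
    set c := g a a ⊓ aᶜ with hc
    have h2 : f a c ≤ aᶜ := by
      have := hABT3 a aᶜ
      rwa [compl_compl] at this
    have h3 : a ⊓ f a c = ⊥ := by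
      have : a ⊓ f a c ≤ a ⊓ aᶜ := inf_le_inf_left a h2
      simpa using le_bot_iff.1 (this.trans_eq inf_compl_eq_bot)
    have h4 : c ≤ ⊥ := by
      have := hABT2 a c a
      rw [h3, hfN1] at this
      exact le_trans (le_inf le_rfl (le_trans inf_le_left h1)) this
    have h5 : g a a ⊓ aᶜ = ⊥ := le_bot_iff.1 h4
    rwa [← sdiff_eq, sdiff_eq_bot_iff] at h5
end

section
/- Let ⟨A,f,g⟩ be a binary PS-algebra. The map d : A → A defined by d(a) = f(a,a) + -g(a,a) is the unary discriminator (d(0)=0 and d(a)=1 for a ≠ 0) if and only if A satisfies: a·b ≠ 0 → g(a,b) ≤ f(a,b). -/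
theorem stmt_16 {A : Type*} [BooleanAlgebra A] (f g : A → A → A)
    (hfN1 : ∀ y, f ⊥ y = ⊥) (hfN2 : ∀ x, f x ⊥ = ⊥)
    (hfA1 : ∀ x y z, f (x ⊔ y) z = f x z ⊔ f y z)
    (hfA2 : ∀ x y z, f z (x ⊔ y) = f z x ⊔ f z y)
    (hgN1 : ∀ y, g ⊥ y = ⊤) (hgN2 : ∀ x, g x ⊥ = ⊤)
    (hgA1 : ∀ x y z, g (x ⊔ y) z = g x z ⊓ g y z)
    (hgA2 : ∀ x y z, g z (x ⊔ y) = g z x ⊓ g z y) :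
    ((f ⊥ ⊥ ⊔ (g ⊥ ⊥)ᶜ = ⊥) ∧ ∀ a : A, a ≠ ⊥ → f a a ⊔ (g a a)ᶜ = ⊤) ↔
      (∀ a b, a ⊓ b ≠ ⊥ → g a b ≤ f a b) := by
  have fmono1 : ∀ {x y} z, x ≤ y → f x z ≤ f y z := by
    intro x y z h
    have := hfA1 x y z
    rw [sup_eq_right.mpr h] at this
    rw [this]; exact le_sup_left
  have fmono2 : ∀ {x y} z, x ≤ y → f z x ≤ f z y := by
    intro x y z h
    have := hfA2 x y z
    rw [sup_eq_right.mpr h] at this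
    rw [this]; exact le_sup_left
  have ganti1 : ∀ {x y} z, x ≤ y → g y z ≤ g x z := by
    intro x y z h
    have := hgA1 x y z
    rw [sup_eq_right.mpr h] at this
    rw [this]; exact inf_le_left
  have ganti2 : ∀ {x y} z, x ≤ y → g z y ≤ g z x := by
    intro x y z h
    have := hgA2 x y z
    rw [sup_eq_right.mpr h] at this
    rw [this]; exact inf_le_left
  constructor
  · rintro ⟨-, h⟩ a b hab
    set c := a ⊓ b with hc
    have hd : f c c ⊔ (g c c)ᶜ = ⊤ := h c hab
    have h1 : f c c ≤ f a b :=
      le_trans (fmono1 c inf_le_left) (fmono2 a inf_le_right)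
    have h2 : g a b ≤ g c c :=
      le_trans (ganti1 b inf_le_left) (ganti2 c inf_le_right)
    have h3 : (g c c)ᶜ ≤ (g a b)ᶜ := compl_le_compl h2
    have h4 : f a b ⊔ (g a b)ᶜ = ⊤ :=
      top_le_iff.mp (hd ▸ sup_le_sup h1 h3)
    have h5 : (f a b ⊔ (g a b)ᶜ)ᶜ = ⊥ := by rw [h4, compl_top]
    rw [compl_sup, compl_compl] at h5
    exact sdiff_eq_bot_iff.mp (by rw [sdiff_eq, inf_comm]; exact h5)
  · intro h
    refine ⟨by rw [hfN1, hgN1, compl_top, sup_bot_eq], fun a ha => ?_⟩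
    have := h a a (by simpa using ha)
    have := sup_le_sup this (le_refl (g a a)ᶜ)
    rw [sup_compl_eq_top] at this
    exact top_le_iff.mp this
end

section
/- Let ⟨A,f,g⟩ be a PS-algebra. Define on ultrafilters of A the relations Q_f(u₁,u₂,u₃) ⟺ ∀x ∈ u₁, ∀y ∈ u₃, f(x,y) ∈ u₂, and S_g(u₁,u₂,u₃) ⟺ ∃x ∈ u₁, ∃y ∈ u₃, g(x,y) ∈ u₂. Then A satisfies (wMIA): x ≠ 0 ∧ y ≠ 0 → g(x,y) ≤ f(x,y), if and only if S_g ⊆ Q_f. -/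
def IsUltrafilter {A : Type*} [BooleanAlgebra A] (F : Set A) : Prop :=
  ⊤ ∈ F ∧ ⊥ ∉ F ∧ (∀ x y, x ∈ F → x ≤ y → y ∈ F) ∧
    (∀ x y, x ∈ F → y ∈ F → x ⊓ y ∈ F) ∧ (∀ x : A, x ∈ F ∨ xᶜ ∈ F)

private lemma exists_ultra {A : Type*} [BooleanAlgebra A] (a : A) (ha : a ≠ ⊥) :
    ∃ F : Set A, IsUltrafilter F ∧ a ∈ F := by
  classical
  set S : Set (Set A) := {F | ⊤ ∈ F ∧ ⊥ ∉ F ∧ (∀ x y, x ∈ F → x ≤ y → y ∈ F) ∧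
    (∀ x y, x ∈ F → y ∈ F → x ⊓ y ∈ F) ∧ a ∈ F} with hS
  have hbase : {z : A | a ≤ z} ∈ S := by
    refine ⟨le_top, ?_, ?_, ?_, le_rfl⟩
    · intro h; exact ha (le_bot_iff.mp h)
    · intro x y hx hxy; exact le_trans hx hxy
    · intro x y hx hy; exact le_inf hx hy
  have hch : ∀ c ⊆ S, IsChain (· ⊆ ·) c → c.Nonempty → ∃ ub ∈ S, ∀ s ∈ c, s ⊆ ub := by
    rintro c hcS hchain ⟨F₀, hF₀⟩
    refine ⟨⋃₀ c, ⟨?_, ?_, ?_, ?_, ?_⟩, fun s hs => Set.subset_sUnion_of_mem hs⟩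
    · exact ⟨F₀, hF₀, (hcS hF₀).1⟩
    · rintro ⟨F, hF, hbot⟩; exact (hcS hF).2.1 hbot
    · rintro x y ⟨F, hF, hx⟩ hxy; exact ⟨F, hF, (hcS hF).2.2.1 x y hx hxy⟩
    · rintro x y ⟨F₁, hF₁, hx⟩ ⟨F₂, hF₂, hy⟩
      rcases hchain.total hF₁ hF₂ with h | h
      · exact ⟨F₂, hF₂, (hcS hF₂).2.2.2.1 x y (h hx) hy⟩
      · exact ⟨F₁, hF₁, (hcS hF₁).2.2.2.1 x y hx (h hy)⟩
    · exact ⟨F₀, hF₀, (hcS hF₀).2.2.2.2⟩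
  obtain ⟨F, -, hFmax⟩ := zorn_subset_nonempty S hch _ hbase
  have hFS := hFmax.prop
  obtain ⟨htop, hbot, hup, hinf, haF⟩ := hFS
  refine ⟨F, ⟨htop, hbot, hup, hinf, ?_⟩, haF⟩
  intro x
  by_contra h
  push_neg at h
  obtain ⟨hx, hxc⟩ := h
  set F' : Set A := {z | ∃ w ∈ F, w ⊓ x ≤ z} with hF'
  have hFF' : F ⊆ F' := fun w hw => ⟨w, hw, inf_le_left⟩
  have hF'S : F' ∈ S := by
    refine ⟨hFF' htop, ?_, ?_, ?_, hFF' haF⟩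
    · rintro ⟨w, hw, hwx⟩
      have : w ≤ xᶜ := le_compl_iff_disjoint_right.mpr
        (disjoint_iff.mpr (le_bot_iff.mp hwx))
      exact hxc (hup w xᶜ hw this)
    · rintro z z' ⟨w, hw, hwz⟩ hzz'; exact ⟨w, hw, hwz.trans hzz'⟩
    · rintro z z' ⟨w, hw, hwz⟩ ⟨w', hw', hwz'⟩
      refine ⟨w ⊓ w', hinf _ _ hw hw', ?_⟩
      refine le_inf (le_trans ?_ hwz) (le_trans ?_ hwz')
      · exact inf_le_inf_right x inf_le_left
      · exact inf_le_inf_right x inf_le_right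
  have := (hFmax.eq_of_subset hF'S hFF').symm
  exact hx (this ▸ (⟨⊤, htop, by simp⟩ : x ∈ F'))

theorem stmt_17 {A : Type*} [BooleanAlgebra A] (f g : A → A → A)
    (hfN1 : ∀ y, f ⊥ y = ⊥) (hfN2 : ∀ x, f x ⊥ = ⊥)
    (hfA1 : ∀ x y z, f (x ⊔ y) z = f x z ⊔ f y z)
    (hfA2 : ∀ x y z, f z (x ⊔ y) = f z x ⊔ f z y)
    (hgN1 : ∀ y, g ⊥ y = ⊤) (hgN2 : ∀ x, g x ⊥ = ⊤)
    (hgA1 : ∀ x y z, g (x ⊔ y) z = g x z ⊓ g y z)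
    (hgA2 : ∀ x y z, g z (x ⊔ y) = g z x ⊓ g z y) :
    (∀ x y, x ≠ ⊥ → y ≠ ⊥ → g x y ≤ f x y) ↔
      (∀ u₁ u₂ u₃ : Set A, IsUltrafilter u₁ → IsUltrafilter u₂ → IsUltrafilter u₃ →
        (∃ x ∈ u₁, ∃ y ∈ u₃, g x y ∈ u₂) →
        (∀ x ∈ u₁, ∀ y ∈ u₃, f x y ∈ u₂)) := by
  have fmono1 : ∀ {a b} (z : A), a ≤ b → f a z ≤ f b z := by
    intro a b z hab
    have : f (a ⊔ b) z = f a z ⊔ f b z := hfA1 a b z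
    rw [sup_eq_right.mpr hab] at this
    rw [this]; exact le_sup_left
  have fmono2 : ∀ {a b} (z : A), a ≤ b → f z a ≤ f z b := by
    intro a b z hab
    have : f z (a ⊔ b) = f z a ⊔ f z b := hfA2 a b z
    rw [sup_eq_right.mpr hab] at this
    rw [this]; exact le_sup_left
  have ganti1 : ∀ {a b} (z : A), a ≤ b → g b z ≤ g a z := by
    intro a b z hab
    have h := hgA1 a b z
    rw [sup_eq_right.mpr hab] at h
    rw [h]; exact inf_le_left
  have ganti2 : ∀ {a b} (z : A), a ≤ b → g z b ≤ g z a := by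
    intro a b z hab
    have h := hgA2 a b z
    rw [sup_eq_right.mpr hab] at h
    rw [h]; exact inf_le_left
  constructor
  · rintro hwMIA u₁ u₂ u₃ hu₁ hu₂ hu₃ ⟨x₀, hx₀, y₀, hy₀, hg⟩ x hx y hy
    obtain ⟨-, hb₁, hup₁, hinf₁, -⟩ := hu₁
    obtain ⟨-, hb₂, hup₂, -, -⟩ := hu₂
    obtain ⟨-, hb₃, hup₃, hinf₃, -⟩ := hu₃
    have hx' : x ⊓ x₀ ∈ u₁ := hinf₁ _ _ hx hx₀
    have hy' : y ⊓ y₀ ∈ u₃ := hinf₃ _ _ hy hy₀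
    have hxne : x ⊓ x₀ ≠ ⊥ := fun h => hb₁ (h ▸ hx')
    have hyne : y ⊓ y₀ ≠ ⊥ := fun h => hb₃ (h ▸ hy')
    have hchain : g x₀ y₀ ≤ f x y :=
      calc g x₀ y₀ ≤ g (x ⊓ x₀) y₀ := ganti1 _ inf_le_right
        _ ≤ g (x ⊓ x₀) (y ⊓ y₀) := ganti2 _ inf_le_right
        _ ≤ f (x ⊓ x₀) (y ⊓ y₀) := hwMIA _ _ hxne hyne
        _ ≤ f x (y ⊓ y₀) := fmono1 _ inf_le_left
        _ ≤ f x y := fmono2 _ inf_le_left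
    exact hup₂ _ _ hg hchain
  · intro H x y hx hy
    by_contra hle
    have hne : g x y ⊓ (f x y)ᶜ ≠ ⊥ := fun h =>
      hle (sdiff_eq_bot_iff.mp (by rwa [sdiff_eq]))
    obtain ⟨u₁, hu₁, hxu₁⟩ := exists_ultra x hx
    obtain ⟨u₃, hu₃, hyu₃⟩ := exists_ultra y hy
    obtain ⟨u₂, hu₂, hcu₂⟩ := exists_ultra _ hne
    have hg' : g x y ∈ u₂ := hu₂.2.2.1 _ _ hcu₂ inf_le_left
    have hfc : (f x y)ᶜ ∈ u₂ := hu₂.2.2.1 _ _ hcu₂ inf_le_right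
    have hf' : f x y ∈ u₂ := H u₁ u₂ u₃ hu₁ hu₂ hu₃ ⟨x, hxu₁, y, hyu₃, hg'⟩ x hxu₁ y hyu₃
    have : f x y ⊓ (f x y)ᶜ ∈ u₂ := hu₂.2.2.2.1 _ _ hf' hfc
    rw [inf_compl_eq_bot] at this
    exact hu₂.2.1 this
end

section
/- Let ⟨A,f,g⟩ be a betweenness algebra and u₁, u₂, u₃ ultrafilters of A. If Q_f(u₁,u₂,u₃) (i.e., ∀x ∈ u₁, ∀y ∈ u₃, f(x,y) ∈ u₂) and S_g(u₁,u₃,u₂) (i.e., ∃x ∈ u₁, ∃y ∈ u₂, g(x,y) ∈ u₃), then u₂ = u₃. -/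
theorem stmt_18 {A : Type*} [BooleanAlgebra A] (f g : A → A → A)
    (hfN1 : ∀ y, f ⊥ y = ⊥) (hfN2 : ∀ x, f x ⊥ = ⊥)
    (hfA1 : ∀ x y z, f (x ⊔ y) z = f x z ⊔ f y z)
    (hfA2 : ∀ x y z, f z (x ⊔ y) = f z x ⊔ f z y)
    (hgN1 : ∀ y, g ⊥ y = ⊤) (hgN2 : ∀ x, g x ⊥ = ⊤)
    (hgA1 : ∀ x y z, g (x ⊔ y) z = g x z ⊓ g y z)
    (hgA2 : ∀ x y z, g z (x ⊔ y) = g z x ⊓ g z y)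
    (hABT0 : ∀ x, x ≤ f x x)
    (hABT1f : ∀ x y, f x y ≤ f y x)
    (hABT1g : ∀ x y, g x y ≤ g y x)
    (hABT2 : ∀ x y z, y ⊓ f x z ≤ f (x ⊓ f x y) z)
    (hABT3 : ∀ x y, f x (g x yᶜ ⊓ y) ≤ y)
    (hwMIA : ∀ x y, x ≠ ⊥ → y ≠ ⊥ → g x y ≤ f x y)
    (u₁ u₂ u₃ : Set A)
    (hu₁ : IsUltrafilter u₁) (hu₂ : IsUltrafilter u₂) (hu₃ : IsUltrafilter u₃)
    (hQ : ∀ x ∈ u₁, ∀ y ∈ u₃, f x y ∈ u₂)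
    (hS : ∃ x ∈ u₁, ∃ y ∈ u₂, g x y ∈ u₃) :
    u₂ = u₃ := by
  obtain ⟨_, hbot2, hup2, hmeet2, hcomp2⟩ := hu₂
  obtain ⟨_, hbot3, hup3, hmeet3, hcomp3⟩ := hu₃
  obtain ⟨a, ha, b, hb, hg⟩ := hS
  -- f monotone in 2nd arg
  have hfmono : ∀ x {u v : A}, u ≤ v → f x u ≤ f x v := by
    intro x u v huv
    have : f x v = f x u ⊔ f x v := by rw [← hfA2, sup_eq_right.mpr huv]
    rw [this]; exact le_sup_left
  -- g antitone in 2nd arg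
  have hganti : ∀ x {u v : A}, u ≤ v → g x v ≤ g x u := by
    intro x u v huv
    have : g x v = g x u ⊓ g x v := by rw [← hgA2, sup_eq_right.mpr huv]
    rw [this]; exact inf_le_left
  -- u₃ ⊆ u₂
  have hsub : u₃ ⊆ u₂ := by
    intro z hz
    rcases hcomp2 z with h | h
    · exact h
    · exfalso
      set b' := b ⊓ zᶜ with hb'
      have hb'2 : b' ∈ u₂ := hmeet2 _ _ hb h
      have hg3 : g a b' ∈ u₃ := hup3 _ _ hg (hganti a inf_le_left)
      have hmem3 : g a b' ⊓ z ∈ u₃ := hmeet3 _ _ hg3 hz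
      have hmem2 : f a (g a b' ⊓ z) ∈ u₂ := hQ a ha _ hmem3
      have hzle : z ≤ b'ᶜ := by
        rw [hb', compl_inf, compl_compl]; exact le_sup_right
      have hle : f a (g a b' ⊓ z) ≤ b'ᶜ := by
        calc f a (g a b' ⊓ z) ≤ f a (g a b'ᶜᶜ ⊓ b'ᶜ) := by
              apply hfmono; rw [compl_compl]; exact inf_le_inf_left _ hzle
          _ ≤ b'ᶜ := hABT3 a b'ᶜ
      have : (⊥ : A) ∈ u₂ := by
        have := hmeet2 _ _ hb'2 (hup2 _ _ hmem2 hle)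
        rwa [inf_compl_eq_bot] at this
      exact hbot2 this
  -- equality
  ext y
  constructor
  · intro hy
    by_contra hy3
    rcases hcomp3 y with h | h
    · exact hy3 h
    · have : (⊥ : A) ∈ u₂ := by
        have := hmeet2 _ _ hy (hsub h)
        rwa [inf_compl_eq_bot] at this
      exact hbot2 this
  · exact fun hy => hsub hy
end
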